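/- arXiv:1310.4083 — 5 statements merged into one kernel-verified Lean document; each statement's English description precedes it below -/
import Mathlib

section
/- In a finite modular lattice, if X covers Y, then the covering interval [X,Y] is equivalent under the projectivity relation ≡ to a covering interval [A,B] where A is join irreducible. -/
variable {α : Type*}

/-- One step of the projectivity relation on intervals: `[A ⊔ B, B] ≡ [A, A ⊓ B]`.
An interval `[X,Y]` (with `Y ≤ X`) is encoded as the pair `(X, Y)`. -/
def IntervalTranspose [Lattice α] (p q : α × α) : Prop :=
  ∃ a b : α, p = (a ⊔ b, b) ∧ q = (a, a ⊓ b)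

/-- The projectivity relation `≡` on intervals: the smallest equivalence relation
with `[A ⊔ B, B] ≡ [A, A ⊓ B]`. -/
def IntervalEquiv [Lattice α] : α × α → α × α → Prop :=
  Relation.EqvGen IntervalTranspose

/-- A lattice is multiplicity free if along any maximal chain the covering
intervals are pairwise inequivalent under the projectivity relation. -/
def MultFree (α : Type*) [Lattice α] : Prop :=
  ∀ C : Set α, IsMaxChain (· ≤ ·) C →
    ∀ a ∈ C, ∀ b ∈ C, ∀ c ∈ C, ∀ d ∈ C,
      b ⋖ a → d ⋖ c → IntervalEquiv (a, b) (c, d) → a = c ∧ b = d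

/-! Take `A` minimal with `A ⊔ Y = X`. Any `b < A` has `Y ≤ b ⊔ Y < X`, so `b ≤ Y` since `Y ⋖ X`;
hence `A` cannot be the join of two strictly smaller elements, and `[X, Y] = [A ⊔ Y, Y]`
transposes to `[A, A ⊓ Y]`, a covering interval by (lower) modularity. -/

theorem IntervalEquiv.sup_inf [Lattice α] (a b : α) : IntervalEquiv (a ⊔ b, b) (a, a ⊓ b) :=
  .rel _ _ ⟨a, b, rfl, rfl⟩

section MinimalSupEq

variable [Lattice α] {X Y A : α}

theorem le_of_lt_of_minimal_sup_eq (h : Y ⋖ X) (hA : Minimal (· ⊔ Y = X) A) {b : α}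
    (hb : b < A) : b ≤ Y := by
  have hbX : b ⊔ Y ≤ X := hA.prop ▸ sup_le_sup_right hb.le Y
  have hbX' : b ⊔ Y ≠ X := fun hbY => hA.not_prop_of_lt hb hbY
  by_contra hbY
  exact h.2 (right_lt_sup.2 hbY) (hbX.lt_of_ne hbX')

theorem supIrred_of_minimal_sup_eq (h : Y ⋖ X) (hA : Minimal (· ⊔ Y = X) A) : SupIrred A := by
  have hAY : ¬A ≤ Y := fun hAY => h.ne' (hA.prop.symm.trans (sup_eq_right.2 hAY))
  refine ⟨fun hmin => hAY ((hmin inf_le_left).trans inf_le_right), fun b c hbc => ?_⟩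
  by_contra! hne
  have hb : b < A := (hbc ▸ le_sup_left).lt_of_ne hne.1
  have hc : c < A := (hbc ▸ le_sup_right).lt_of_ne hne.2
  exact hAY (hbc ▸ sup_le (le_of_lt_of_minimal_sup_eq h hA hb) (le_of_lt_of_minimal_sup_eq h hA hc))

end MinimalSupEq

/-- In a finite modular lattice, every covering interval `[X,Y]` is projectively
equivalent to a covering interval `[A,B]` with `A` join irreducible. -/
theorem covering_interval_equiv_supIrred [Lattice α] [Fintype α] [IsModularLattice α]
    {X Y : α} (h : Y ⋖ X) :
    ∃ A B : α, SupIrred A ∧ B ⋖ A ∧ IntervalEquiv (X, Y) (A, B) := by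
  obtain ⟨A, hA⟩ := exists_minimal_of_wellFoundedLT (· ⊔ Y = X) ⟨X, sup_eq_left.2 h.le⟩
  refine ⟨A, A ⊓ Y, supIrred_of_minimal_sup_eq h hA, ?_, ?_⟩
  · exact inf_covBy_of_covBy_sup_right (hA.prop ▸ h)
  · simpa only [hA.prop] using IntervalEquiv.sup_inf A Y
end

section
/- The perspectivity relation → on covering intervals of a lattice is transitive: if [A,B] → [U,V] and [U,V] → [X,Y], then [A,B] → [X,Y]. -/
/-! If `[A,B] → [U,V] → [X,Y]`, then `A ≤ U`, so `A ⊓ Y = A ⊓ (U ⊓ Y) = A ⊓ V = B`. Moreover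
`Y ≤ A ⊔ Y ≤ U ⊔ Y = X` and `A ≰ Y` (otherwise `A ≤ U ⊓ Y = V` and `U = A ⊔ V = V`), so the
covering `Y ⋖ X` forces `A ⊔ Y = X`. -/

variable {α : Type*}

/-- The perspectivity relation `[U,V] → [X,Y]` on covering intervals:
`V ⋖ U`, `Y ⋖ X`, `U ⊔ Y = X` and `U ⊓ Y = V`. Intervals are encoded as pairs. -/
def Persp [Lattice α] (p q : α × α) : Prop :=
  p.2 ⋖ p.1 ∧ q.2 ⋖ q.1 ∧ p.1 ⊔ q.2 = q.1 ∧ p.1 ⊓ q.2 = p.2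

theorem CovBy.sup_eq_of_le_of_not_le [SemilatticeSup α] {a b c : α} (hbc : b ⋖ c) (hac : a ≤ c)
    (hab : ¬a ≤ b) : a ⊔ b = c :=
  (hbc.eq_or_eq le_sup_right (sup_le hac hbc.le)).resolve_left fun h => hab (sup_eq_right.1 h)

namespace Persp

variable [Lattice α] {p q : α × α}

theorem fst_le (h : Persp p q) : p.1 ≤ q.1 :=
  h.2.2.1 ▸ le_sup_left

theorem not_fst_le_snd (h : Persp p q) : ¬p.1 ≤ q.2 := fun hle =>
  h.2.1.lt.ne' (h.2.2.1.symm.trans (sup_eq_right.2 hle))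

end Persp

/-- The perspectivity relation on covering intervals is transitive. -/
theorem persp_trans [Lattice α] {p q r : α × α} (h1 : Persp p q) (h2 : Persp q r) :
    Persp p r := by
  have hAU : p.1 ≤ q.1 := h1.fst_le
  have hAX : p.1 ≤ r.1 := hAU.trans h2.fst_le
  have hAY : ¬p.1 ≤ r.2 := fun hle => h1.not_fst_le_snd (h2.2.2.2 ▸ le_inf hAU hle)
  refine ⟨h1.1, h2.2.1, h2.2.1.sup_eq_of_le_of_not_le hAX hAY, ?_⟩
  calc p.1 ⊓ r.2 = p.1 ⊓ (q.1 ⊓ r.2) := by rw [← inf_assoc, inf_eq_left.2 hAU]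
    _ = p.2 := by rw [h2.2.2.2, h1.2.2.2]
end

section
/- Let Λ be a finite distributive multiplicity-free lattice whose directed Ext graph has acyclic underlying graph. Then for join irreducibles X, Y with tops x, y: X covers Y in the poset of join irreducibles if and only if Ext_Λ(x,y) ≠ 0. -/
variable {α : Type*}

/-- There is an Ext arrow from the simple factor of the join irreducible `A` to that of `B`:
a length-two uniserial interval whose top covering factor is in the class of `A` and whose
bottom covering factor is in the class of `B`. -/
def ExtRel [Lattice α] (A B : α) : Prop :=
  ∃ A0 B0 u v w : α, A0 ⋖ A ∧ B0 ⋖ B ∧ v ⋖ u ∧ w ⋖ v ∧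
    (∀ z : α, w < z → z < u → z = v) ∧
    IntervalEquiv (u, v) (A, A0) ∧ IntervalEquiv (v, w) (B, B0)

/-- The underlying undirected graph of the directed Ext graph, with the simple lattice
factors identified with the join irreducible elements. -/
def ExtGraph (α : Type*) [Lattice α] : SimpleGraph {a : α // SupIrred a} where
  Adj x y := x ≠ y ∧ (ExtRel (x : α) (y : α) ∨ ExtRel (y : α) (x : α))
  symm := ⟨fun x y h => ⟨Ne.symm h.1, h.2.symm⟩⟩
  loopless := ⟨fun x h => h.1 rfl⟩

/-!
A sup-prime `J` occurs as a composition factor of an interval `[a, b]` when `J ≤ a` and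
`J ≰ b`, and this is invariant under transposition. So the Ext data place `X` at the top and
`Y` at the bottom of a uniserial interval `[u, w]`; since `u = w ⊔ X`, primality of `Y` gives
`Y < X`. A join irreducible `Z` strictly between them also occurs in `[u, w]`, hence in
`[u, v]` (then `u = w ⊔ Z` and `X ≤ Z`) or in `[v, w]` (then `Z ≤ Y`).
Conversely, if `X` covers `Y` among join irreducibles, let `v` be the unique lower cover of `X`
and `w` the largest element below `v` not above `Y`. Every join irreducible below `v` is `Y` or
lies below `w`, so `v = Y ⊔ w`, whence `[v, w] ≡ [Y, Y ⊓ w]` and `[X, w]` is uniserial.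
-/

def SupIrredCovBy [SemilatticeSup α] (Y X : α) : Prop :=
  Y < X ∧ ∀ Z : α, SupIrred Z → ¬(Y < Z ∧ Z < X)

section Lattice

variable [Lattice α]

theorem IntervalEquiv.le_and_not_le_iff {p q : α × α} (h : IntervalEquiv p q) {J : α}
    (hJ : SupPrime J) : (J ≤ p.1 ∧ ¬J ≤ p.2) ↔ (J ≤ q.1 ∧ ¬J ≤ q.2) := by
  induction h with
  | rel p q hpq =>
    obtain ⟨a, b, rfl, rfl⟩ := hpq
    exact ⟨fun ⟨hJab, hJb⟩ => ⟨(hJ.le_sup.1 hJab).resolve_right hJb,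
        fun hJa => hJb (hJa.trans inf_le_right)⟩,
      fun ⟨hJa, hJab⟩ => ⟨hJa.trans le_sup_left, fun hJb => hJab (le_inf hJa hJb)⟩⟩
  | refl => exact Iff.rfl
  | symm _ _ _ ih => exact ih.symm
  | trans _ _ _ _ _ ih₁ ih₂ => exact ih₁.trans ih₂

theorem SupIrred.le_of_covBy_of_lt {X v z : α} (hX : SupIrred X) (hv : v ⋖ X) (hz : z < X) :
    z ≤ v := by
  have hzv : z ⊔ v ≠ X := fun h => (hX.2 h).elim hz.ne hv.lt.ne
  rcases hv.eq_or_eq le_sup_right (sup_le hz.le hv.le) with h | h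
  exacts [sup_eq_right.1 h, absurd h hzv]

theorem sup_eq_or_le_of_uniserial {u v w J : α} (hwu : w ≤ u)
    (huniq : ∀ z : α, w < z → z < u → z = v) (hJu : J ≤ u) (hJw : ¬J ≤ w) :
    w ⊔ J = u ∨ J ≤ v := by
  rcases (sup_le hwu hJu).lt_or_eq with h | h
  exacts [.inr (huniq _ (left_lt_sup.2 hJw) h ▸ le_sup_right), .inl h]

theorem SupPrime.exists_isGreatest_le_not_ge [WellFoundedGT α] {Y : α} (hY : SupPrime Y)
    (a : α) : ∃ w, IsGreatest {z | z ≤ a ∧ ¬Y ≤ z} w := by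
  obtain ⟨y, hyY⟩ := not_isMin_iff.1 hY.1
  obtain ⟨w, ⟨hwa, hYw⟩, hmax⟩ := wellFounded_gt.has_min {z | z ≤ a ∧ ¬Y ≤ z}
    ⟨a ⊓ y, inf_le_left, fun h => hyY.not_ge (h.trans inf_le_right)⟩
  refine ⟨w, ⟨hwa, hYw⟩, fun z ⟨hza, hYz⟩ => ?_⟩
  have hzw : z ⊔ w ∈ {z | z ≤ a ∧ ¬Y ≤ z} :=
    ⟨sup_le hza hwa, fun h => (hY.le_sup.1 h).elim hYz hYw⟩
  exact le_sup_left.trans (le_sup_right.eq_of_not_lt (hmax _ hzw)).ge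

theorem le_of_forall_supIrred_le [WellFoundedLT α] {a b : α}
    (h : ∀ j : α, SupIrred j → j ≤ a → j ≤ b) : a ≤ b := by
  induction a using WellFoundedLT.induction with
  | _ a ih =>
  by_cases ha : SupIrred a
  · exact h a ha le_rfl
  · rcases not_supIrred.1 ha with hmin | ⟨c, d, rfl, hc, hd⟩
    · exact (hmin inf_le_left).trans inf_le_right
    · exact sup_le (ih c hc fun j hj hjc => h j hj (hjc.trans hc.le))
        (ih d hd fun j hj hjd => h j hj (hjd.trans hd.le))

end Lattice

section DistribLattice

variable [DistribLattice α] {X Y : α}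

theorem ExtRel.supIrredCovBy (hX : SupIrred X) (hY : SupIrred Y) (h : ExtRel X Y) :
    SupIrredCovBy Y X := by
  obtain ⟨A0, B0, u, v, w, hA0, hB0, hvu, hwv, huniq, hX_uv, hY_vw⟩ := h
  obtain ⟨hXu, hXv⟩ := (hX_uv.le_and_not_le_iff hX.supPrime).2 ⟨le_rfl, hA0.lt.not_ge⟩
  obtain ⟨hYv, hYw⟩ := (hY_vw.le_and_not_le_iff hY.supPrime).2 ⟨le_rfl, hB0.lt.not_ge⟩
  have hwu : w ≤ u := hwv.le.trans hvu.le
  have hXw : ¬X ≤ w := fun h => hXv (h.trans hwv.le)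
  have hwX : w ⊔ X = u := (sup_eq_or_le_of_uniserial hwu huniq hXu hXw).resolve_right hXv
  have hYX : Y ≤ X :=
    (hY.supPrime.le_sup.1 (hwX ▸ hYv.trans hvu.le)).resolve_left hYw
  refine ⟨hYX.lt_of_ne fun h => hXv (h ▸ hYv), fun Z hZ ⟨hYZ, hZX⟩ => ?_⟩
  have hZw : ¬Z ≤ w := fun h => hYw (hYZ.le.trans h)
  rcases sup_eq_or_le_of_uniserial hwu huniq (hZX.le.trans hXu) hZw with hwZ | hZv
  · rcases hX.supPrime.le_sup.1 (hwZ ▸ hXu) with h | h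
    exacts [hXw h, hZX.not_ge h]
  · exact hYZ.not_ge ((hY_vw.le_and_not_le_iff hZ.supPrime).1 ⟨hZv, hZw⟩).1

theorem SupIrredCovBy.extRel [WellFoundedLT α] [WellFoundedGT α] (hX : SupIrred X)
    (hY : SupIrred Y) (h : SupIrredCovBy Y X) : ExtRel X Y := by
  obtain ⟨hYX, hbetween⟩ := h
  obtain ⟨v, hYv, hvX⟩ := exists_le_covBy_of_lt hYX
  obtain ⟨w, ⟨hwv, hYw⟩, hw⟩ := hY.supPrime.exists_isGreatest_le_not_ge v
  have hv : v = Y ⊔ w := by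
    refine le_antisymm (le_of_forall_supIrred_le fun j hj hjv => ?_) (sup_le hYv hwv)
    by_cases hYj : Y ≤ j
    · obtain rfl : Y = j := hYj.eq_of_not_lt fun h => hbetween j hj ⟨h, hjv.trans_lt hvX.lt⟩
      exact le_sup_left
    · exact (hw ⟨hjv, hYj⟩).trans le_sup_right
  have huniq : ∀ z : α, w < z → z < X → z = v := fun z hwz hzX => by
    have hzv : z ≤ v := hX.le_of_covBy_of_lt hvX hzX
    have hYz : Y ≤ z := by_contra fun h => hwz.not_ge (hw ⟨hzv, h⟩)
    exact hzv.antisymm (hv ▸ sup_le hYz hwz.le)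
  have hwv' : w ⋖ v :=
    ⟨hwv.lt_of_ne fun h => hYw (h ▸ hYv),
      fun z hwz hzv => hzv.ne (huniq z hwz (hzv.trans hvX.lt))⟩
  exact ⟨v, Y ⊓ w, X, v, w, hvX, inf_covBy_of_covBy_sup_right (hv ▸ hwv'), hvX, hwv', huniq,
    .refl _, .rel _ _ ⟨Y, w, by rw [← hv], rfl⟩⟩

end DistribLattice

theorem covers_iff_ext_ne_zero_general [DistribLattice α] [Fintype α] {X Y : α} (hX : SupIrred X)
    (hY : SupIrred Y) :
    (Y < X ∧ ∀ Z : α, SupIrred Z → ¬(Y < Z ∧ Z < X)) ↔ ExtRel X Y :=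
  ⟨fun h => SupIrredCovBy.extRel hX hY h, ExtRel.supIrredCovBy hX hY⟩

/-- In a finite distributive multiplicity-free lattice whose Ext graph has acyclic
underlying graph, a join irreducible `X` covers a join irreducible `Y` in the poset of
join irreducibles iff `Ext_Λ(x,y) ≠ 0`. -/
theorem covers_iff_ext_ne_zero [DistribLattice α] [Fintype α] (hmf : MultFree α)
    (hacyc : (ExtGraph α).IsAcyclic) {X Y : α} (hX : SupIrred X) (hY : SupIrred Y) :
    (Y < X ∧ ∀ Z : α, SupIrred Z → ¬(Y < Z ∧ Z < X)) ↔ ExtRel X Y :=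
  covers_iff_ext_ne_zero_general hX hY
end

section
/- Let M be a module of finite length over a ring R. If M is indecomposable, then the Ext_Λ graph of M is connected, where Λ is the lattice of submodules of M. -/
variable {R M : Type*} [Ring R] [AddCommGroup M] [Module R M]

/-- The subquotient `U / V` associated to a pair `(U, V)` of submodules with `V ≤ U`. -/
abbrev SubQuot (p : Submodule R M × Submodule R M) :=
  ↥p.1 ⧸ (p.2.comap p.1.subtype)

/-- Two pairs of submodules have isomorphic associated subquotients. -/
def FactorIso (p q : Submodule R M × Submodule R M) : Prop :=
  Nonempty (SubQuot p ≃ₗ[R] SubQuot q)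

/-- There is an Ext arrow from the composition factor of `p` to that of `q`:
submodules `W ≤ V ≤ U` with `U/W` uniserial of length two, `U/V` isomorphic to the
factor of `p` and `V/W` isomorphic to the factor of `q`. -/
def ExtEdge (p q : Submodule R M × Submodule R M) : Prop :=
  ∃ U V W : Submodule R M, W ⋖ V ∧ V ⋖ U ∧ (∀ Z : Submodule R M, W < Z → Z < U → Z = V) ∧
    FactorIso (U, V) p ∧ FactorIso (V, W) q

/-!
Fix a composition series `s` of `M` with pairwise non-isomorphic factors, and let `s.support X`
be the set of factors occurring in the submodule `X`. A covering `a ⋖ b` adds exactly one factor,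
the one isomorphic to `b / a`; with multiplicity one this makes `support` an injective lattice
homomorphism into the subsets of factors, so `Λ` is finite and distributive. Each factor `i` has a
least submodule `s.hull i` in which it occurs, and `s.hull i` has a unique maximal submodule `V`.
If `s.hull k` is maximal below `s.hull i`, then removing `k` from `V`, i.e. dividing by the sum `W`
of the hulls of the other factors of `V`, leaves a uniserial `s.hull i / W` with factors `i` over
`k`: an Ext arrow. So factors with comparable hulls are connected, and a connected component `S`
and its complement are the supports of complementary submodules (sums of hulls); indecomposability
forces `S` to be everything.
-/

theorem inf_eq_inf_of_le {α : Type*} [SemilatticeInf α] {a b x y : α} (hxy : x ≤ y)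
    (h : y ⊓ a = y ⊓ b) : x ⊓ a = x ⊓ b := by
  rw [← inf_eq_left.mpr hxy, inf_assoc, h, inf_assoc]

theorem inf_eq_inf_iff_of_covBy {α : Type*} [Lattice α] {u u' a b : α} (hu : u ≤ u')
    (hcov : u ⊓ a ⋖ u ⊓ b) (hcov' : u' ⊓ a ⋖ u' ⊓ b) : u ⊓ a = u' ⊓ a ↔ u ⊓ b = u' ⊓ b := by
  constructor
  · intro h
    rw [h] at hcov
    exact (hcov'.wcovBy.eq_or_eq hcov.le (inf_le_inf_right b hu)).resolve_left hcov.lt.ne'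
  · intro h
    refine le_antisymm (inf_le_inf_right a hu) (le_inf ?_ inf_le_right)
    exact hcov'.le.trans (h ▸ inf_le_left)

theorem Fin.exists_not_castSucc_and_succ {n : ℕ} {P : Fin (n + 1) → Prop} (h0 : ¬ P 0)
    (hlast : P (Fin.last n)) : ∃ i : Fin n, ¬ P i.castSucc ∧ P i.succ := by
  induction n with
  | zero => exact absurd hlast h0
  | succ n ih =>
    by_cases h : P (Fin.last n).castSucc
    · obtain ⟨i, hi⟩ := ih (P := fun t => P t.castSucc) h0 h
      exact ⟨i.castSucc, hi⟩
    · exact ⟨Fin.last n, h, hlast⟩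

theorem FactorIso.symm {p q : Submodule R M × Submodule R M} (h : FactorIso p q) :
    FactorIso q p :=
  ⟨h.some.symm⟩

theorem FactorIso.trans {p q r : Submodule R M × Submodule R M} (h : FactorIso p q)
    (h' : FactorIso q r) : FactorIso p r :=
  ⟨h.some.trans h'.some⟩

theorem factorIso_of_sup_eq_of_inf_eq {a b c d : Submodule R M} (hsup : c ⊔ a = b)
    (hinf : c ⊓ a = d) : FactorIso (b, a) (c, d) := by
  subst hsup hinf
  exact ⟨(LinearMap.quotientInfEquivSupQuotient c a).symm⟩

namespace Submodule

variable {a b : Submodule R M}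

theorem inf_eq_or_covBy_inf_of_covBy (hab : a ⋖ b) (c : Submodule R M) :
    a ⊓ c = b ⊓ c ∨ (a ⊓ c ⋖ b ⊓ c ∧ FactorIso (b, a) (b ⊓ c, a ⊓ c)) := by
  rcases hab.wcovBy.eq_or_eq (le_sup_left : a ≤ a ⊔ b ⊓ c) (sup_le hab.le inf_le_left) with h | h
  · exact .inl <| le_antisymm (inf_le_inf_right c hab.le)
      (le_inf (sup_eq_left.mp h) inf_le_right)
  · have hinf : b ⊓ c ⊓ a = a ⊓ c := by rw [inf_right_comm, inf_eq_right.mpr hab.le]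
    have hcov := inf_covBy_of_covBy_sup_left (show a ⋖ a ⊔ b ⊓ c by rwa [h])
    rw [inf_comm, hinf] at hcov
    exact .inr ⟨hcov, factorIso_of_sup_eq_of_inf_eq (by rwa [sup_comm]) hinf⟩

theorem sup_eq_or_covBy_sup_of_covBy (hab : a ⋖ b) (c : Submodule R M) :
    c ⊔ a = c ⊔ b ∨ (c ⊔ a ⋖ c ⊔ b ∧ FactorIso (c ⊔ b, c ⊔ a) (b, a)) := by
  rcases hab.wcovBy.eq_or_eq (le_inf hab.le le_sup_right : a ≤ b ⊓ (c ⊔ a)) inf_le_left with h | h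
  · have hsup : b ⊔ (c ⊔ a) = c ⊔ b := by rw [sup_left_comm, sup_eq_left.mpr hab.le]
    have hcov := covBy_sup_of_inf_covBy_left (show b ⊓ (c ⊔ a) ⋖ b by rwa [h])
    rw [hsup] at hcov
    exact .inr ⟨hcov, factorIso_of_sup_eq_of_inf_eq hsup h⟩
  · exact .inl <| le_antisymm (sup_le_sup_left hab.le c) (sup_le le_sup_left (inf_eq_left.mp h))

end Submodule

def ExtAdj (p q : Submodule R M × Submodule R M) : Prop :=
  ExtEdge p q ∨ ExtEdge q p ∨ FactorIso p q

instance : Std.Symm (ExtAdj (R := R) (M := M)) where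
  symm _ _
    | .inl h => .inr (.inl h)
    | .inr (.inl h) => .inl h
    | .inr (.inr h) => .inr (.inr h.symm)

namespace CompositionSeries

variable (s : CompositionSeries (Submodule R M))

def factor (i : Fin s.length) : Submodule R M × Submodule R M :=
  (s i.succ, s i.castSucc)

/-- The indices of the composition factors of `s` that occur in `X`. -/
def support (X : Submodule R M) : Set (Fin s.length) :=
  {i | s i.castSucc ⊓ X < s i.succ ⊓ X}

def IsMultiplicityFree : Prop :=
  ∀ i j, FactorIso (s.factor i) (s.factor j) → i = j

def hull (i : Fin s.length) : Submodule R M :=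
  sInf {X | i ∈ s.support X}

variable {s} {X Y a b : Submodule R M} {i : Fin s.length}

theorem covBy_succ (i : Fin s.length) : s i.castSucc ⋖ s i.succ :=
  s.step i

theorem mem_support_iff : i ∈ s.support X ↔ s i.castSucc ⊓ X ≠ s i.succ ⊓ X :=
  (inf_le_inf_right X (covBy_succ i).le).lt_iff_ne

theorem covBy_of_mem_support (hi : i ∈ s.support X) :
    s i.castSucc ⊓ X ⋖ s i.succ ⊓ X ∧ FactorIso (s.factor i) (s i.succ ⊓ X, s i.castSucc ⊓ X) :=
  (Submodule.inf_eq_or_covBy_inf_of_covBy (covBy_succ i) X).resolve_left hi.ne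

theorem support_mono (h : X ≤ Y) : s.support X ⊆ s.support Y := fun _ hi =>
  mem_support_iff.mpr fun hY => mem_support_iff.mp hi <| by
    rw [← inf_eq_right.mpr h, ← inf_assoc, hY, inf_assoc]

@[simp]
theorem support_bot : s.support ⊥ = ∅ := by
  simp [support]

@[simp]
theorem support_top : s.support ⊤ = Set.univ :=
  Set.eq_univ_of_forall fun i => by simpa [support] using (covBy_succ i).lt

section Series

variable (h0 : s.head = ⊥) (h1 : s.last = ⊤)
include h0

theorem inf_eq_inf_of_support_subset (hXY : X ≤ Y) (h : s.support Y ⊆ s.support X)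
    (t : Fin (s.length + 1)) : s t ⊓ X = s t ⊓ Y := by
  induction t using Fin.induction with
  | zero => simp [show s 0 = ⊥ from h0]
  | succ i ih =>
    by_cases hY : i ∈ s.support Y
    · have hcov := (covBy_of_mem_support (h hY)).1
      rw [ih] at hcov
      exact ((covBy_of_mem_support hY).1.wcovBy.eq_or_eq hcov.le
        (inf_le_inf_left _ hXY)).resolve_left hcov.lt.ne'
    · have hX : i ∉ s.support X := fun hX => hY (support_mono hXY hX)
      rw [← not_not.mp (mem_support_iff.not.mp hX), ih, not_not.mp (mem_support_iff.not.mp hY)]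

include h1

theorem eq_of_le_of_support_subset (hXY : X ≤ Y) (h : s.support Y ⊆ s.support X) : X = Y := by
  simpa [show s (Fin.last _) = ⊤ from h1] using
    inf_eq_inf_of_support_subset h0 hXY h (Fin.last _)

theorem exists_support_eq_insert_of_covBy (hab : a ⋖ b) :
    ∃ i, i ∉ s.support a ∧ s.support b = insert i (s.support a) ∧
      FactorIso (b, a) (s.factor i) := by
  have hstep (t : Fin (s.length + 1)) : s t ⊓ a = s t ⊓ b ∨
      (s t ⊓ a ⋖ s t ⊓ b ∧ FactorIso (b, a) (s t ⊓ b, s t ⊓ a)) := by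
    simpa only [inf_comm _ (s t)] using Submodule.inf_eq_or_covBy_inf_of_covBy hab (s t)
  -- `i` is the index at which the chains `s t ⊓ a ≤ s t ⊓ b` separate
  obtain ⟨i, hi, hi'⟩ := Fin.exists_not_castSucc_and_succ (P := fun t => s t ⊓ a ≠ s t ⊓ b)
    (by simp [show s 0 = ⊥ from h0]) (by simpa [show s (Fin.last _) = ⊤ from h1] using hab.ne)
  rw [not_not] at hi
  have hbelow {t} (ht : t ≤ i.castSucc) : s t ⊓ a = s t ⊓ b :=
    inf_eq_inf_of_le (s.strictMono.monotone ht) hi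
  have habove {t} (ht : i.succ ≤ t) : s t ⊓ a ⋖ s t ⊓ b :=
    ((hstep t).resolve_left fun h => hi' (inf_eq_inf_of_le (s.strictMono.monotone ht) h)).1
  have hib : i ∈ s.support b := by
    refine mem_support_iff.mpr fun h => hi' (le_antisymm (inf_le_inf_left _ hab.le) ?_)
    rw [← h, ← hi]
    exact inf_le_inf_right _ (covBy_succ i).le
  have hkey : s i.succ ⊓ a = s i.castSucc ⊓ b :=
    ((covBy_of_mem_support hib).1.wcovBy.eq_or_eq (hi ▸ inf_le_inf_right _ (covBy_succ i).le)
      (inf_le_inf_left _ hab.le)).resolve_right hi'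
  have hother {t} (ht : t ≠ i) : t ∈ s.support a ↔ t ∈ s.support b := by
    rw [mem_support_iff, mem_support_iff]
    rcases ht.lt_or_gt with ht | ht
    · rw [hbelow (Fin.castSucc_le_castSucc_iff.mpr ht.le),
        hbelow (Fin.succ_le_castSucc_iff.mpr ht)]
    · have hle := Fin.succ_le_castSucc_iff.mpr ht
      exact not_congr (inf_eq_inf_iff_of_covBy (covBy_succ t).le (habove hle)
        (habove (hle.trans (Fin.castSucc_le_succ t))))
  refine ⟨i, fun h => mem_support_iff.mp h (hi.trans hkey.symm), ?_, ?_⟩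
  · ext t
    rcases eq_or_ne t i with rfl | ht
    · simp [hib]
    · simp [ht, hother ht]
  · have hiso := ((hstep i.succ).resolve_left hi').2
    rw [hkey] at hiso
    exact hiso.trans (covBy_of_mem_support hib).2.symm

theorem factorIso_of_covBy (hab : a ⋖ b) (hb : i ∈ s.support b) (ha : i ∉ s.support a) :
    FactorIso (b, a) (s.factor i) := by
  obtain ⟨c, -, hsupp, hiso⟩ := exists_support_eq_insert_of_covBy h0 h1 hab
  rw [hsupp] at hb
  rwa [hb.resolve_right ha]

theorem covBy_of_support_eq_insert (hab : a ≤ b) (ha : i ∉ s.support a)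
    (hb : s.support b = insert i (s.support a)) : a ⋖ b := by
  refine ⟨hab.lt_of_ne fun h => ha (h ▸ hb ▸ Set.mem_insert i _), fun Z haZ hZb => ?_⟩
  by_cases hZ : i ∈ s.support Z
  · refine hZb.ne (eq_of_le_of_support_subset h0 h1 hZb.le ?_)
    rw [hb]
    exact Set.insert_subset hZ (support_mono haZ.le)
  · refine haZ.ne (eq_of_le_of_support_subset h0 h1 haZ.le fun j hj => ?_)
    have hj' := support_mono hZb.le hj
    rw [hb] at hj'
    exact hj'.resolve_left (ne_of_mem_of_not_mem hj hZ)

end Series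

section MultiplicityFree

variable (h0 : s.head = ⊥) (h1 : s.last = ⊤) (hs : s.IsMultiplicityFree)
include h0 h1 hs

theorem support_eq_insert_of_factorIso (hab : a ⋖ b) (hiso : FactorIso (b, a) (s.factor i)) :
    i ∉ s.support a ∧ s.support b = insert i (s.support a) := by
  obtain ⟨j, hj, hsupp, hjiso⟩ := exists_support_eq_insert_of_covBy h0 h1 hab
  obtain rfl := hs j i (hjiso.symm.trans hiso)
  exact ⟨hj, hsupp⟩

theorem support_sup (X Y : Submodule R M) : s.support (X ⊔ Y) = s.support X ∪ s.support Y := by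
  refine Set.Subset.antisymm ?_ (Set.union_subset (support_mono le_sup_left)
    (support_mono le_sup_right))
  suffices ∀ t, s.support (X ⊔ s t ⊓ Y) ⊆ s.support X ∪ s.support Y by
    simpa [show s (Fin.last _) = ⊤ from h1] using this (Fin.last _)
  intro t
  induction t using Fin.induction with
  | zero => simp [show s 0 = ⊥ from h0]
  | succ j ih =>
    by_cases hj : j ∈ s.support Y
    · obtain ⟨hcov, hiso⟩ := covBy_of_mem_support hj
      rcases Submodule.sup_eq_or_covBy_sup_of_covBy hcov X with h | ⟨hcov', hiso'⟩
      · rwa [← h]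
      · rw [(support_eq_insert_of_factorIso h0 h1 hs hcov' (hiso'.trans hiso.symm)).2]
        exact Set.insert_subset (Or.inr hj) ih
    · rwa [← not_not.mp (mem_support_iff.not.mp hj)]

theorem mem_support_inf_of_factorIso (hab : a ⋖ b) (hiso : FactorIso (b, a) (s.factor i))
    (hY : i ∈ s.support Y) : i ∈ s.support (b ⊓ Y) := by
  rcases Submodule.inf_eq_or_covBy_inf_of_covBy hab Y with h | ⟨hcov, hiso'⟩
  · exfalso
    rcases Submodule.sup_eq_or_covBy_sup_of_covBy hab Y with h' | ⟨hcov', hiso'⟩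
    · refine hab.ne (eq_of_le_of_inf_le_of_sup_le hab.le h.ge ?_)
      rw [sup_comm, ← h', sup_comm]
    · exact (support_eq_insert_of_factorIso h0 h1 hs hcov' (hiso'.trans hiso)).1
        (support_mono le_sup_left hY)
  · rw [(support_eq_insert_of_factorIso h0 h1 hs hcov (hiso'.symm.trans hiso)).2]
    exact Set.mem_insert i _

theorem support_inf (X Y : Submodule R M) : s.support (X ⊓ Y) = s.support X ∩ s.support Y := by
  refine Set.Subset.antisymm (Set.subset_inter (support_mono inf_le_left)
    (support_mono inf_le_right)) ?_
  suffices ∀ t, s.support (s t ⊓ X) ∩ s.support Y ⊆ s.support (s t ⊓ X ⊓ Y) by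
    simpa [show s (Fin.last _) = ⊤ from h1] using this (Fin.last _)
  intro t
  induction t using Fin.induction with
  | zero => simp [show s 0 = ⊥ from h0]
  | succ j ih =>
    by_cases hj : j ∈ s.support X
    · obtain ⟨hcov, hiso⟩ := covBy_of_mem_support hj
      rw [(support_eq_insert_of_factorIso h0 h1 hs hcov hiso.symm).2]
      rintro m ⟨rfl | hm, hmY⟩
      · exact mem_support_inf_of_factorIso h0 h1 hs hcov hiso.symm hmY
      · exact support_mono (inf_le_inf_right Y hcov.le) (ih ⟨hm, hmY⟩)
    · rwa [← not_not.mp (mem_support_iff.not.mp hj)]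

theorem support_subset_support_iff : s.support X ⊆ s.support Y ↔ X ≤ Y := by
  refine ⟨fun h => inf_eq_left.mp (eq_of_le_of_support_subset h0 h1 inf_le_left ?_),
    support_mono⟩
  rw [support_inf h0 h1 hs]
  exact Set.subset_inter subset_rfl h

theorem support_injective : Function.Injective s.support := fun _ _ h =>
  le_antisymm ((support_subset_support_iff h0 h1 hs).mp h.le)
    ((support_subset_support_iff h0 h1 hs).mp h.ge)

theorem finite_submodule : Finite (Submodule R M) :=
  Finite.of_injective _ (support_injective h0 h1 hs)

theorem isCompl_of_isCompl_support (h : IsCompl (s.support X) (s.support Y)) : IsCompl X Y := by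
  refine ⟨disjoint_iff.mpr (support_injective h0 h1 hs ?_),
    codisjoint_iff.mpr (support_injective h0 h1 hs ?_)⟩
  · rw [support_inf h0 h1 hs, support_bot]
    exact h.inf_eq_bot
  · rw [support_sup h0 h1 hs, support_top]
    exact h.sup_eq_top

theorem hull_le_iff : s.hull i ≤ X ↔ i ∈ s.support X := by
  have := finite_submodule h0 h1 hs
  have hclosed : InfClosed {X | i ∈ s.support X} := fun X hX Y hY => by
    rw [Set.mem_ofPred_eq, support_inf h0 h1 hs]
    exact ⟨hX, hY⟩
  have hmem : i ∈ s.support (s.hull i) :=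
    hclosed.sInf_mem (Set.toFinite _) (by simp) subset_rfl
  exact ⟨fun h => support_mono h hmem, fun h => sInf_le h⟩

theorem exists_covBy_hull (i : Fin s.length) :
    ∃ V, V ⋖ s.hull i ∧ i ∉ s.support V ∧ s.support (s.hull i) = insert i (s.support V) := by
  have := finite_submodule h0 h1 hs
  have hi : i ∈ s.support (s.hull i) := (hull_le_iff h0 h1 hs).mp le_rfl
  obtain ⟨V, -, hV⟩ := exists_le_covBy_of_lt
    (bot_lt_iff_ne_bot.mpr fun h : s.hull i = ⊥ => by simp [h] at hi)
  obtain ⟨c, hc, hsupp, -⟩ := exists_support_eq_insert_of_covBy h0 h1 hV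
  have hiV : i ∉ s.support V := fun h => hV.lt.not_ge ((hull_le_iff h0 h1 hs).mpr h)
  rw [hsupp] at hi ⊢
  obtain rfl := hi.resolve_right hiV
  exact ⟨V, hV, hc, rfl⟩

theorem le_of_lt_hull {V Z : Submodule R M}
    (hV : s.support (s.hull i) = insert i (s.support V)) (hZ : Z < s.hull i) : Z ≤ V := by
  refine (support_subset_support_iff h0 h1 hs).mp fun j hj => ?_
  have hj' := support_mono hZ.le hj
  rw [hV] at hj'
  refine hj'.resolve_left ?_
  rintro rfl
  exact hZ.not_ge ((hull_le_iff h0 h1 hs).mpr hj)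

theorem hull_injective : Function.Injective s.hull := by
  intro k m h
  by_contra hkm
  obtain ⟨V, hV, -, hsupp⟩ := exists_covBy_hull h0 h1 hs k
  have hm : m ∈ s.support (s.hull k) := h ▸ (hull_le_iff h0 h1 hs).mp le_rfl
  rw [hsupp] at hm
  exact hV.lt.not_ge (h ▸ (hull_le_iff h0 h1 hs).mpr (hm.resolve_left (Ne.symm hkm)))

theorem exists_support_eq (S : Set (Fin s.length))
    (hS : ∀ m ∈ S, ∀ j, s.hull j ≤ s.hull m → j ∈ S) : ∃ X, s.support X = S := by
  refine ⟨⨆ m ∈ S, s.hull m, Set.Subset.antisymm ?_ fun m hm =>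
    (hull_le_iff h0 h1 hs).mp (le_biSup s.hull hm)⟩
  have hclosed : SupClosed {X | s.support X ⊆ S} := fun X hX Y hY => by
    rw [Set.mem_ofPred_eq, support_sup h0 h1 hs]
    exact Set.union_subset hX hY
  exact hclosed.biSup_mem (Set.toFinite S) (by simp) fun m hm j hj =>
    hS m hm j ((hull_le_iff h0 h1 hs).mpr hj)

theorem extEdge_factor_of_hull_lt {k : Fin s.length} (hki : s.hull k < s.hull i)
    (hmax : ∀ m, s.hull k < s.hull m → ¬ s.hull m < s.hull i) :
    ExtEdge (s.factor i) (s.factor k) := by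
  obtain ⟨V, hV, hiV, hsuppV⟩ := exists_covBy_hull h0 h1 hs i
  have hkV : k ∈ s.support V := (hull_le_iff h0 h1 hs).mp (le_of_lt_hull h0 h1 hs hsuppV hki)
  obtain ⟨W, hW⟩ := exists_support_eq h0 h1 hs (s.support V \ {k}) fun m ⟨hmV, hmk⟩ j hjm => by
    refine ⟨(hull_le_iff h0 h1 hs).mp (hjm.trans ((hull_le_iff h0 h1 hs).mpr hmV)), ?_⟩
    rintro rfl
    have hkm : s.hull j < s.hull m := hjm.lt_of_ne ((hull_injective h0 h1 hs).ne (Ne.symm hmk))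
    exact hmax m hkm (((hull_le_iff h0 h1 hs).mpr hmV).trans_lt hV.lt)
  have hkW : k ∉ s.support W := by simp [hW]
  have hsuppW : s.support V = insert k (s.support W) := by
    rw [hW, Set.insert_sdiff_singleton, Set.insert_eq_of_mem hkV]
  have hWV : W ≤ V := (support_subset_support_iff h0 h1 hs).mp (hW ▸ Set.sdiff_subset)
  have hWcov : W ⋖ V := covBy_of_support_eq_insert h0 h1 hWV hkW hsuppW
  refine ⟨s.hull i, V, W, hWcov, hV, fun Z hWZ hZi => ?_,
    factorIso_of_covBy h0 h1 hV ((hull_le_iff h0 h1 hs).mp le_rfl) hiV,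
    factorIso_of_covBy h0 h1 hWcov hkV hkW⟩
  exact (hWcov.wcovBy.eq_or_eq hWZ.le (le_of_lt_hull h0 h1 hs hsuppV hZi)).resolve_left hWZ.ne'

theorem reflTransGen_extAdj_factor_of_hull_le {j : Fin s.length} (h : s.hull j ≤ s.hull i) :
    Relation.ReflTransGen ExtAdj (s.factor j) (s.factor i) := by
  have := finite_submodule h0 h1 hs
  induction i using (InvImage.wf s.hull wellFounded_lt).induction with
  | h i ih =>
    rcases h.eq_or_lt with h | h
    · rw [hull_injective h0 h1 hs h]
    · obtain ⟨k, ⟨hjk, hki⟩, hkmax⟩ :=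
        (Set.toFinite {m | s.hull j ≤ s.hull m ∧ s.hull m < s.hull i}).exists_maximalFor s.hull _
          ⟨j, le_rfl, h⟩
      have hedge := extEdge_factor_of_hull_lt h0 h1 hs hki fun m hkm hmi =>
        hkm.not_ge (hkmax ⟨hjk.trans hkm.le, hmi⟩ hkm.le)
      exact (ih k hki hjk).tail (.inr (.inl hedge))

theorem eq_empty_or_eq_univ_of_indecomposable
    (hind : ∀ A B : Submodule R M, IsCompl A B → A = ⊥ ∨ B = ⊥) (S : Set (Fin s.length))
    (hS : ∀ i j, s.hull j ≤ s.hull i → (j ∈ S ↔ i ∈ S)) : S = ∅ ∨ S = Set.univ := by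
  obtain ⟨A, hA⟩ := exists_support_eq h0 h1 hs S fun m hm j hj => (hS m j hj).mpr hm
  obtain ⟨B, hB⟩ := exists_support_eq h0 h1 hs Sᶜ fun m hm j hj hjS => hm ((hS m j hj).mp hjS)
  have hAB : IsCompl A B := isCompl_of_isCompl_support h0 h1 hs (hA ▸ hB ▸ isCompl_compl)
  rcases hind A B hAB with rfl | rfl
  · exact .inl (by simpa using hA.symm)
  · exact .inr (by simpa using hB.symm)

theorem reflTransGen_extAdj_factor
    (hind : ∀ A B : Submodule R M, IsCompl A B → A = ⊥ ∨ B = ⊥) (i j : Fin s.length) :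
    Relation.ReflTransGen ExtAdj (s.factor i) (s.factor j) := by
  have hconn {m l} (h : s.hull l ≤ s.hull m) :=
    reflTransGen_extAdj_factor_of_hull_le h0 h1 hs h
  rcases eq_empty_or_eq_univ_of_indecomposable h0 h1 hs hind
      {m | Relation.ReflTransGen ExtAdj (s.factor m) (s.factor j)}
      fun m l hlm => ⟨fun hl => (symm (hconn hlm)).trans hl, (hconn hlm).trans⟩ with h | h
  · exact absurd (h ▸ Relation.ReflTransGen.refl : j ∈ (∅ : Set _)) id
  · exact Set.eq_univ_iff_forall.mp h i

end MultiplicityFree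

end CompositionSeries

theorem extGraph_connected_of_indecomposable_general
    (hmf : ∃ s : CompositionSeries (Submodule R M), s.head = ⊥ ∧ s.last = ⊤ ∧
      ∀ i j : Fin s.length,
        FactorIso (s i.succ, s i.castSucc) (s j.succ, s j.castSucc) → i = j)
    (hind : ∀ A B : Submodule R M, IsCompl A B → A = ⊥ ∨ B = ⊥) :
    ∀ p q : Submodule R M × Submodule R M, p.2 ⋖ p.1 → q.2 ⋖ q.1 →
      Relation.ReflTransGen
        (fun a b => ExtEdge a b ∨ ExtEdge b a ∨ FactorIso a b) p q := by
  obtain ⟨s, h0, h1, hs⟩ := hmf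
  intro p q hp hq
  obtain ⟨i, -, -, hpi⟩ := s.exists_support_eq_insert_of_covBy h0 h1 hp
  obtain ⟨j, -, -, hqj⟩ := s.exists_support_eq_insert_of_covBy h0 h1 hq
  exact .head (.inr (.inr hpi))
    ((s.reflTransGen_extAdj_factor h0 h1 hs hind i j).tail (.inr (.inr hqj.symm)))

/-- If `M` is an indecomposable multiplicity-free module of finite length, then the
`Ext_Λ` graph of `M` is connected: any two composition factors (represented by covering
pairs of submodules) are linked by a chain of Ext arrows (in either direction), where
isomorphic factors represent the same vertex. -/
theorem extGraph_connected_of_indecomposable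
    (hfl : IsFiniteLength R M)
    (hmf : ∃ s : CompositionSeries (Submodule R M), s.head = ⊥ ∧ s.last = ⊤ ∧
      ∀ i j : Fin s.length,
        FactorIso (s i.succ, s i.castSucc) (s j.succ, s j.castSucc) → i = j)
    (hind : ∀ A B : Submodule R M, IsCompl A B → A = ⊥ ∨ B = ⊥) :
    ∀ p q : Submodule R M × Submodule R M, p.2 ⋖ p.1 → q.2 ⋖ q.1 →
      Relation.ReflTransGen
        (fun a b => ExtEdge a b ∨ ExtEdge b a ∨ FactorIso a b) p q :=
  extGraph_connected_of_indecomposable_general hmf hind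
end

section
/- In a finite multiplicity-free modular lattice Λ, no sublattice is isomorphic to M₃. -/
variable {α : Type*}

/-- A lattice contains a sublattice isomorphic to the diamond `M₃`: three pairwise
incomparable elements with pairwise equal meets and pairwise equal joins. -/
def HasM3 (α : Type*) [Lattice α] : Prop :=
  ∃ a b c : α,
    a ⊓ b = b ⊓ c ∧ b ⊓ c = a ⊓ c ∧ a ⊔ b = b ⊔ c ∧ b ⊔ c = a ⊔ c ∧
    ¬a ≤ b ∧ ¬b ≤ a ∧ ¬b ≤ c ∧ ¬c ≤ b ∧ ¬a ≤ c ∧ ¬c ≤ a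

/-!
Suppose `a, b, c` form a diamond with bottom `m = a ⊓ b`, and pick `x` with `m ⋖ x ≤ a`. Putting
`y = (x ⊔ b) ⊓ c`, modularity gives `y ⊔ b = x ⊔ b`, `y ⊓ b = m` and `y ⊓ a = m`, so transposing
through `[x ⊔ b, b]` and `[y ⊔ a, a]` makes `[x, m]` projective to `[y ⊔ a, a]`. In a modular
lattice projectivity preserves covers, so both are covering intervals of one maximal chain
through `m ⋖ x ≤ a ⋖ y ⊔ a`, which multiplicity freeness forbids.
-/

section Modular

variable [Lattice α] [IsModularLattice α] {p q : α × α}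

theorem IntervalTranspose.covBy_iff (h : IntervalTranspose p q) : p.2 ⋖ p.1 ↔ q.2 ⋖ q.1 := by
  obtain ⟨a, b, rfl, rfl⟩ := h
  exact ⟨inf_covBy_of_covBy_sup_right, covBy_sup_of_inf_covBy_left⟩

theorem IntervalEquiv.covBy_iff (h : IntervalEquiv p q) : p.2 ⋖ p.1 ↔ q.2 ⋖ q.1 := by
  induction h with
  | rel _ _ h => exact h.covBy_iff
  | refl => rfl
  | symm _ _ _ ih => exact ih.symm
  | trans _ _ _ _ _ ih₁ ih₂ => exact ih₁.trans ih₂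

end Modular

theorem intervalEquiv_of_sup_eq [Lattice α] {x y b : α} (hsup : x ⊔ b = y ⊔ b) :
    IntervalEquiv (x, x ⊓ b) (y, y ⊓ b) :=
  have hx : IntervalTranspose (x ⊔ b, b) (x, x ⊓ b) := ⟨x, b, rfl, rfl⟩
  have hy : IntervalTranspose (x ⊔ b, b) (y, y ⊓ b) := ⟨y, b, by rw [hsup], rfl⟩
  .trans _ _ _ (.symm _ _ (.rel _ _ hx)) (.rel _ _ hy)

theorem isChain_of_le_of_le_of_le [Preorder α] {a b c d : α} (hab : a ≤ b) (hbc : b ≤ c)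
    (hcd : c ≤ d) : IsChain (· ≤ ·) ({a, b, c, d} : Set α) := by
  intro x hx y hy _
  simp only [Set.mem_insert_iff, Set.mem_singleton_iff] at hx hy
  rcases hx with rfl | rfl | rfl | rfl <;> rcases hy with rfl | rfl | rfl | rfl <;>
    first | (left; order) | (right; order)

theorem MultFree.not_intervalEquiv_of_covBy_of_le_of_covBy [Lattice α] (hmf : MultFree α)
    {a b c d : α} (hba : b ⋖ a) (had : a ≤ d) (hdc : d ⋖ c) : ¬IntervalEquiv (a, b) (c, d) := by
  intro h
  obtain ⟨C, hC, hsub⟩ := (isChain_of_le_of_le_of_le hba.le had hdc.le).exists_maxChain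
  obtain ⟨-, rfl⟩ := hmf C hC a (hsub (by simp)) b (hsub (by simp)) c (hsub (by simp)) d
    (hsub (by simp)) hba hdc h
  exact hba.lt.not_ge had

theorem intervalEquiv_sup_of_M3 [Lattice α] [IsModularLattice α] {a b c x : α}
    (hab_bc : a ⊓ b = b ⊓ c) (hbc_ac : b ⊓ c = a ⊓ c) (hsup : a ⊔ b = b ⊔ c) (hx : a ⊓ b ≤ x)
    (hxa : x ≤ a) : IntervalEquiv (x, a ⊓ b) ((x ⊔ b) ⊓ c ⊔ a, a) := by
  set y := (x ⊔ b) ⊓ c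
  have hxb : x ⊓ b = a ⊓ b := le_antisymm (inf_le_inf_right b hxa) (le_inf hx inf_le_right)
  have hyb_sup : y ⊔ b = x ⊔ b := by
    rw [inf_sup_assoc_of_le c le_sup_right, sup_comm c b, ← hsup, inf_eq_left]
    exact sup_le_sup_right hxa b
  have hyb_inf : y ⊓ b = a ⊓ b := by
    rw [inf_right_comm, inf_eq_right.2 (le_sup_right : b ≤ x ⊔ b), hab_bc]
  have hya : y ⊓ a = a ⊓ b := by
    refine le_antisymm ?_ (le_inf (le_inf (hx.trans le_sup_left) ?_) inf_le_left)
    · calc y ⊓ a ≤ c ⊓ a := inf_le_inf_right a inf_le_right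
        _ = a ⊓ b := by rw [inf_comm, ← hbc_ac, hab_bc]
    · exact hab_bc ▸ inf_le_right
  have hxy : IntervalEquiv (x, a ⊓ b) (y, a ⊓ b) := by
    simpa only [hxb, hyb_inf] using intervalEquiv_of_sup_eq (b := b) hyb_sup.symm
  exact .trans _ _ _ hxy (.symm _ _ (.rel _ _ ⟨y, a, rfl, by rw [hya]⟩))

/-- A finite multiplicity-free modular lattice has no sublattice isomorphic to `M₃`. -/
theorem no_M3_of_multFree [Lattice α] [Fintype α] [IsModularLattice α]
    (hmf : MultFree α) : ¬HasM3 α := by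
  rintro ⟨a, b, c, hab_bc, hbc_ac, hsup, -, hab, -, -, -, -, -⟩
  obtain ⟨x, hx, hxa⟩ := exists_covBy_le_of_lt (inf_lt_left.2 hab)
  have h := intervalEquiv_sup_of_M3 hab_bc hbc_ac hsup hx.le hxa
  exact hmf.not_intervalEquiv_of_covBy_of_le_of_covBy hx hxa (h.covBy_iff.1 hx) h
end
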